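/- Let T be a continuous linear operator on X. Assume there exist a dense linear subspace X₀ of X with T(X₀) ⊆ X₀ and every vector of X₀ periodic for T, and a constant α ∈ (0,1), such that for every x ∈ X₀ and every ε > 0 there exist z ∈ X₀ and an integer n ≥ 1 with: (1) ‖z‖ < ε; (2) ‖T^{n+k}z − T^{k}x‖ < ε for every integer k with 0 ≤ k ≤ αn. Then T is chaotic and U-frequently hypercyclic. -/

import Mathlib

/-!
Fix a dense sequence `(yᵢ)` in `X₀` and enumerate it so that every `yᵢ` recurs infinitely often.
Starting from `u₀ = 0`, the hypothesis (applied to `yᵢ - uₛ`, with the time shifted to a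
multiple of the period of `uₛ`) yields a correction `zₛ ∈ X₀` and a time `nₛ₊₁` so that the orbit
of `uₛ₊₁ = uₛ + zₛ` follows that of the current target along `[nₛ₊₁, (1 + α) nₛ₊₁]`, while `zₛ` is
so small that it barely moves the orbit of `uₛ` before the previous window ends. The limit `x`
then follows each periodic `yᵢ` along infinitely many such windows; inside one window the times
`n + m t` (with `m` the period of `yᵢ`) all visit any given neighbourhood of `yᵢ`, and they make
up a fixed proportion of `[0, (1 + α) n]`, giving positive upper density. Dense orbit follows, and
the periodic points contain the dense set `X₀`.
-/

/-- The upper density of a set `A ⊆ ℕ`: `limsup_N #{n ∈ A : n ≤ N} / (N + 1)`. -/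
noncomputable def upperDensity (A : Set ℕ) : ℝ :=
  Filter.limsup (fun N : ℕ => ((A ∩ Set.Iic N).ncard : ℝ) / ((N : ℝ) + 1)) Filter.atTop

open Filter Set Topology

section UpperDensity

lemma upperDensity_empty : upperDensity ∅ = 0 := by
  simp [upperDensity]

lemma nonempty_of_upperDensity_pos {A : Set ℕ} (hA : 0 < upperDensity A) : A.Nonempty := by
  contrapose! hA
  rw [hA, upperDensity_empty]

lemma isBoundedUnder_le_ncard_inter_Iic_div (A : Set ℕ) :
    IsBoundedUnder (· ≤ ·) atTop fun N : ℕ => ((A ∩ Iic N).ncard : ℝ) / ((N : ℝ) + 1) := by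
  refine isBoundedUnder_of ⟨1, fun N => (div_le_one (by positivity)).2 ?_⟩
  have hle : (A ∩ Iic N).ncard ≤ (Iic N).ncard :=
    ncard_le_ncard inter_subset_right (finite_Iic N)
  simp only [Nat.card_Iic, ← Finset.coe_Iic, ncard_coe_finset] at hle
  exact_mod_cast hle

lemma le_upperDensity_of_frequently {A : Set ℕ} {c : ℝ}
    (h : ∃ᶠ N : ℕ in atTop, c * ((N : ℝ) + 1) ≤ (A ∩ Iic N).ncard) : c ≤ upperDensity A :=
  le_limsup_of_frequently_le (h.mono fun _ hN => (le_div_iff₀ (by positivity)).2 hN)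
    (isBoundedUnder_le_ncard_inter_Iic_div A)

lemma succ_le_ncard_inter_Iic_of_progression {A : Set ℕ} {n m K : ℕ} (hm : 0 < m)
    (hA : ∀ t ≤ K, n + m * t ∈ A) : K + 1 ≤ (A ∩ Iic (n + m * K)).ncard := by
  have hinj : InjOn (fun t => n + m * t) (Iic K) := fun a _ b _ hab =>
    Nat.eq_of_mul_eq_mul_left hm (Nat.add_left_cancel hab)
  have hsub : (fun t => n + m * t) '' Iic K ⊆ A ∩ Iic (n + m * K) := by
    rintro _ ⟨t, ht, rfl⟩
    exact ⟨hA t ht, by simpa using Nat.mul_le_mul_left m ht⟩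
  calc K + 1 = ((fun t => n + m * t) '' Iic K).ncard := by
        rw [hinj.ncard_image]; simp
    _ ≤ _ := ncard_le_ncard hsub ((finite_Iic _).subset inter_subset_right)

lemma upperDensity_pos_of_frequently_progressions {A : Set ℕ} {α : ℝ} (hα : 0 < α) {m : ℕ}
    (hm : 0 < m) (hA : ∀ N₀ : ℕ, ∃ n ≥ N₀, ∀ t : ℕ, ((m * t : ℕ) : ℝ) ≤ α * n → n + m * t ∈ A) :
    0 < upperDensity A := by
  have hmR : (0 : ℝ) < m := by exact_mod_cast hm
  set c := α / (m * (2 + α))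
  refine (show 0 < c by positivity).trans_le (le_upperDensity_of_frequently ?_)
  refine frequently_atTop.2 fun N₀ => ?_
  obtain ⟨n, hn, hnA⟩ := hA (max N₀ 1)
  have hn1 : (1 : ℝ) ≤ n := by exact_mod_cast (le_max_right _ _).trans hn
  set K := ⌊α * n⌋₊ / m
  have hmK : ((m * K : ℕ) : ℝ) ≤ α * n :=
    (Nat.cast_le.2 (Nat.mul_div_le _ _)).trans (Nat.floor_le (by positivity))
  have hlt : α * n < m * (K + 1) := by
    have : ⌊α * n⌋₊ < m * (K + 1) := by
      rw [mul_add, mul_one]; exact Nat.lt_mul_div_succ _ hm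
    calc α * n < ⌊α * n⌋₊ + 1 := Nat.lt_floor_add_one _
      _ ≤ m * (K + 1) := by exact_mod_cast this
  have hcard := succ_le_ncard_inter_Iic_of_progression hm fun t ht =>
    hnA t <| (Nat.cast_le.2 (Nat.mul_le_mul_left m ht)).trans hmK
  refine ⟨n + m * K, (le_max_left _ _).trans (hn.trans (Nat.le_add_right _ _)), ?_⟩
  push_cast at hmK ⊢
  calc c * ((n : ℝ) + m * K + 1) ≤ c * ((2 + α) * n) := by gcongr; nlinarith
    _ = α * n / m := by simp only [c]; field_simp
    _ ≤ K + 1 := by rw [div_le_iff₀ hmR]; linarith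
    _ ≤ _ := by exact_mod_cast hcard

lemma denseRange_of_upperDensity_pos {X : Type*} [TopologicalSpace X] {f : ℕ → X}
    (hf : ∀ V : Set X, IsOpen V → V.Nonempty → 0 < upperDensity {n | f n ∈ V}) :
    DenseRange f :=
  dense_iff_inter_open.2 fun V hV hne =>
    let ⟨n, hn⟩ := nonempty_of_upperDensity_pos (hf V hV hne)
    ⟨f n, hn, n, rfl⟩

end UpperDensity

section Shadowing

variable {R X : Type*} [Ring R] [NormedAddCommGroup X] [Module R X]

namespace ContinuousLinearMap

lemma pow_apply_mem {T : X →L[R] X} {X₀ : Submodule R X} (hinv : ∀ x ∈ X₀, T x ∈ X₀)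
    (i : ℕ) {x : X} (hx : x ∈ X₀) : (T ^ i) x ∈ X₀ := by
  induction i with
  | zero => simpa using hx
  | succ i ih => rw [pow_succ', mul_apply_eq_comp]; exact hinv _ ih

lemma pow_mul_add_apply_of_pow_apply_eq_self {T : X →L[R] X} {m : ℕ} {w : X}
    (hw : (T ^ m) w = w) (q k : ℕ) : (T ^ (m * q + k)) w = (T ^ k) w := by
  induction q with
  | zero => simp
  | succ q ih => rw [Nat.mul_succ, add_right_comm, pow_add, mul_apply_eq_comp, hw, ih]

end ContinuousLinearMap

open ContinuousLinearMap

def OrbitApproximable (T : X →L[R] X) (X₀ : Submodule R X) (α : ℝ) : Prop :=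
  ∀ x ∈ X₀, ∀ ε : ℝ, 0 < ε → ∃ z ∈ X₀, ∃ n : ℕ,
    ‖z‖ < ε ∧ ∀ k : ℕ, (k : ℝ) ≤ α * n → ‖(T ^ (n + k)) z - (T ^ k) x‖ < ε

namespace OrbitApproximable

variable {T : X →L[R] X} {X₀ : Submodule R X} {α : ℝ}

lemma exists_late_approximant (h : OrbitApproximable T X₀ α) (hα : 0 ≤ α) {x : X} (hx : x ∈ X₀)
    {ε : ℝ} (hε : 0 < ε) (B : ℕ) :
    ∃ z ∈ X₀, ∃ n : ℕ, B < n ∧ (∀ j ≤ B, ‖(T ^ j) z‖ < ε) ∧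
      ∀ k : ℕ, (k : ℝ) ≤ α * n → ‖(T ^ (n + k)) z - (T ^ k) x‖ < ε := by
  rcases eq_or_ne x 0 with rfl | hx0
  · exact ⟨0, zero_mem _, B + 1, B.lt_succ_self, by simp [hε], by simp [hε]⟩
  set η := min ε (‖x‖ / 2)
  have hη : 0 < η := lt_min hε (by positivity)
  obtain ⟨δ, hδ, hsmall⟩ : ∃ δ > 0, ∀ z : X, ‖z‖ < δ → ∀ j ∈ Iic B, ‖(T ^ j) z‖ < η := by
    have : ∀ᶠ z in 𝓝 (0 : X), ∀ j ∈ Iic B, ‖(T ^ j) z‖ < η :=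
      (finite_Iic B).eventually_all.2 fun j _ =>
        ((T ^ j).continuous.tendsto' 0 0 (map_zero _)).norm.eventually
          (gt_mem_nhds (by simpa using hη))
    simpa [Metric.eventually_nhds_iff, dist_zero_right] using this
  obtain ⟨z, hz, n, hzδη, happrox⟩ := h x hx (min δ η) (lt_min hδ hη)
  have hzδ : ‖z‖ < δ := hzδη.trans_le (min_le_left _ _)
  have hη' : ∀ k : ℕ, (k : ℝ) ≤ α * n → ‖(T ^ (n + k)) z - (T ^ k) x‖ < η :=
    fun k hk => (happrox k hk).trans_le (min_le_right _ _)
  -- for `n ≤ B` the vector `(T ^ n) z` would be too small to be close to `x`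
  have hn : B < n := by
    by_contra! hnB
    have h1 := hsmall z hzδ n hnB
    have h2 := hη' 0 (by simpa using mul_nonneg hα n.cast_nonneg)
    simp only [add_zero, pow_zero, one_apply_eq_self] at h2
    have := norm_sub_norm_le x ((T ^ n) z)
    rw [norm_sub_rev] at this
    linarith [min_le_right ε (‖x‖ / 2)]
  exact ⟨z, hz, n, hn, fun j hj => (hsmall z hzδ j hj).trans_le (min_le_left _ _),
    fun k hk => (hη' k hk).trans_le (min_le_left _ _)⟩

-- Shifting `n` down to a multiple of the period of `w` leaves `w` unaffected by `T ^ n`.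
lemma exists_correction_of_periodic (h : OrbitApproximable T X₀ α) (hα : 0 ≤ α)
    (hinv : ∀ x ∈ X₀, T x ∈ X₀) {w : X} (hw : w ∈ X₀) {m : ℕ} (hm : 0 < m)
    (hwm : (T ^ m) w = w) {y : X} (hy : y ∈ X₀) {ε : ℝ} (hε : 0 < ε) (B : ℕ) :
    ∃ z ∈ X₀, ∃ n : ℕ, B < n ∧ (∀ j ≤ B, ‖(T ^ j) z‖ < ε) ∧
      ∀ k : ℕ, (k : ℝ) ≤ α * n → ‖(T ^ (n + k)) (w + z) - (T ^ k) y‖ < ε := by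
  obtain ⟨z, hz, n, hn, hsmall, happrox⟩ := h.exists_late_approximant hα (sub_mem hy hw) hε (B + m)
  have hdiv : m * (n / m) + n % m = n := Nat.div_add_mod n m
  have hmod : n % m < m := Nat.mod_lt n hm
  refine ⟨(T ^ (n % m)) z, pow_apply_mem hinv _ hz, m * (n / m), by omega, fun j hj => ?_,
    fun k hk => ?_⟩
  · rw [← mul_apply_eq_comp, ← pow_add]
    exact hsmall _ (by omega)
  · have hk' : (k : ℝ) ≤ α * n :=
      hk.trans (mul_le_mul_of_nonneg_left (by exact_mod_cast hdiv ▸ Nat.le_add_right _ _) hα)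
    convert happrox k hk' using 2
    rw [map_add, pow_mul_add_apply_of_pow_apply_eq_self hwm, ← mul_apply_eq_comp, ← pow_add,
      map_sub, show m * (n / m) + k + n % m = n + k by omega]
    abel

end OrbitApproximable

noncomputable def horizon (α : ℝ) (n : ℕ) : ℕ := n + ⌊α * n⌋₊

lemma horizon_mono {α : ℝ} (hα : 0 ≤ α) : Monotone (horizon α) := fun a b hab =>
  Nat.add_le_add hab (Nat.floor_le_floor (mul_le_mul_of_nonneg_left (by exact_mod_cast hab) hα))

lemma add_le_horizon {α : ℝ} {n k : ℕ} (hk : (k : ℝ) ≤ α * n) : n + k ≤ horizon α n :=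
  Nat.add_le_add_left (Nat.le_floor hk) n

-- The smallness of later corrections up to the horizon `horizon α (n s)` keeps the shadowing
-- achieved at step `s` intact in the limit.
def IsShadowingScheme (T : X →L[R] X) (α : ℝ) (Y u : ℕ → X) (n : ℕ → ℕ) : Prop :=
  ∀ s, horizon α (n s) < n (s + 1) ∧
    (∀ j ≤ horizon α (n s), ‖(T ^ j) (u (s + 1) - u s)‖ ≤ 1 / 2 ^ s) ∧
    ∀ k : ℕ, (k : ℝ) ≤ α * n (s + 1) →
      ‖(T ^ (n (s + 1) + k)) (u (s + 1)) - (T ^ k) (Y s)‖ ≤ 1 / 2 ^ s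

lemma OrbitApproximable.exists_isShadowingScheme {T : X →L[R] X} {X₀ : Submodule R X} {α : ℝ}
    (h : OrbitApproximable T X₀ α) (hα : 0 ≤ α) (hinv : ∀ x ∈ X₀, T x ∈ X₀)
    (hper : ∀ x ∈ X₀, ∃ m : ℕ, 1 ≤ m ∧ (T ^ m) x = x) {Y : ℕ → X} (hY : ∀ s, Y s ∈ X₀) :
    ∃ u n, IsShadowingScheme T α Y u n := by
  have step : ∀ (s : ℕ) (p : X × ℕ), p.1 ∈ X₀ → ∃ q : X × ℕ, q.1 ∈ X₀ ∧
      horizon α p.2 < q.2 ∧ (∀ j ≤ horizon α p.2, ‖(T ^ j) (q.1 - p.1)‖ ≤ 1 / 2 ^ s) ∧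
      ∀ k : ℕ, (k : ℝ) ≤ α * q.2 → ‖(T ^ (q.2 + k)) q.1 - (T ^ k) (Y s)‖ ≤ 1 / 2 ^ s := by
    rintro s ⟨w, N⟩ hw
    obtain ⟨m, hm, hwm⟩ := hper w hw
    obtain ⟨z, hz, n, hNn, hsmall, happrox⟩ :=
      h.exists_correction_of_periodic hα hinv hw hm hwm (hY s) (by positivity : (0 : ℝ) < 1 / 2 ^ s)
        (horizon α N)
    exact ⟨(w + z, n), add_mem hw hz, hNn, fun j hj => by simpa using (hsmall j hj).le,
      fun k hk => (happrox k hk).le⟩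
  choose! next hnext_mem hnext using step
  let p : ℕ → X × ℕ := fun s => Nat.rec ((0 : X), 0) next s
  have hp : ∀ s, (p s).1 ∈ X₀ := fun s => by
    induction s with
    | zero => exact zero_mem _
    | succ s ih => exact hnext_mem s (p s) ih
  exact ⟨fun s => (p s).1, fun s => (p s).2, fun s => hnext s (p s) (hp s)⟩

namespace IsShadowingScheme

variable {T : X →L[R] X} {α : ℝ} {Y u : ℕ → X} {n : ℕ → ℕ}

lemma strictMono (hS : IsShadowingScheme T α Y u n) : StrictMono n :=
  strictMono_nat_of_lt_succ fun s => (Nat.le_add_right _ _).trans_lt (hS s).1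

lemma cauchySeq (hS : IsShadowingScheme T α Y u n) : CauchySeq u :=
  cauchySeq_of_le_geometric_two (C := 2) fun s => by
    simpa [dist_eq_norm, norm_sub_rev] using (hS s).2.1 0 (Nat.zero_le _)

lemma norm_pow_apply_sub_le (hS : IsShadowingScheme T α Y u n) (hα : 0 ≤ α) {x : X}
    (hx : Tendsto u atTop (𝓝 x)) {s j : ℕ} (hj : j ≤ horizon α (n s)) :
    ‖(T ^ j) (x - u s)‖ ≤ 2 / 2 ^ s := by
  have hdist : ∀ t,
      dist ((T ^ j) (u (t + s))) ((T ^ j) (u (t + 1 + s))) ≤ 2 / 2 ^ s / 2 / 2 ^ t := by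
    intro t
    have hjt : j ≤ horizon α (n (t + s)) :=
      hj.trans (horizon_mono hα (hS.strictMono.monotone (Nat.le_add_left s t)))
    rw [dist_comm, dist_eq_norm, ← map_sub, show t + 1 + s = t + s + 1 by omega]
    convert (hS (t + s)).2.1 j hjt using 1
    rw [pow_add]; field_simp
  have hlim : Tendsto (fun t => (T ^ j) (u (t + s))) atTop (𝓝 ((T ^ j) x)) :=
    ((T ^ j).continuous.tendsto x).comp (hx.comp (tendsto_add_atTop_nat s))
  simpa [dist_eq_norm, norm_sub_rev] using dist_le_of_le_geometric_two_of_tendsto₀ hdist hlim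

lemma exists_limit_shadowing [CompleteSpace X] (hS : IsShadowingScheme T α Y u n) (hα : 0 ≤ α) :
    ∃ x : X, ∀ s (k : ℕ), (k : ℝ) ≤ α * n (s + 1) →
      ‖(T ^ (n (s + 1) + k)) x - (T ^ k) (Y s)‖ ≤ 2 / 2 ^ s := by
  obtain ⟨x, hx⟩ := cauchySeq_tendsto_of_complete hS.cauchySeq
  refine ⟨x, fun s k hk => ?_⟩
  have htail : ‖(T ^ (n (s + 1) + k)) (x - u (s + 1))‖ ≤ 1 / 2 ^ s :=
    (hS.norm_pow_apply_sub_le hα hx (add_le_horizon hk)).trans_eq (by rw [pow_succ]; field_simp)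
  rw [map_sub] at htail
  calc _ ≤ ‖(T ^ (n (s + 1) + k)) x - (T ^ (n (s + 1) + k)) (u (s + 1))‖ +
        ‖(T ^ (n (s + 1) + k)) (u (s + 1)) - (T ^ k) (Y s)‖ :=
          norm_sub_le_norm_sub_add_norm_sub _ _ _
    _ ≤ 1 / 2 ^ s + 1 / 2 ^ s := add_le_add htail ((hS s).2.2 k hk)
    _ = 2 / 2 ^ s := by ring

end IsShadowingScheme

def FrequentlyShadows (T : X →L[R] X) (α : ℝ) (x y : X) : Prop :=
  ∀ δ > 0, ∀ N₀ : ℕ, ∃ n ≥ N₀, ∀ k : ℕ, (k : ℝ) ≤ α * n → ‖(T ^ (n + k)) x - (T ^ k) y‖ < δ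

variable {T : X →L[R] X} {α : ℝ}

lemma FrequentlyShadows.upperDensity_pos {x y : X} (hxy : FrequentlyShadows T α x y)
    (hα : 0 < α) {m : ℕ} (hm : 0 < m) (hym : (T ^ m) y = y) {V : Set X} (hV : IsOpen V)
    (hyV : y ∈ V) : 0 < upperDensity {n | (T ^ n) x ∈ V} := by
  obtain ⟨r, hr, hball⟩ := Metric.isOpen_iff.1 hV y hyV
  refine upperDensity_pos_of_frequently_progressions hα hm fun N₀ => ?_
  obtain ⟨n, hn, hclose⟩ := hxy r hr N₀
  refine ⟨n, hn, fun t ht => hball ?_⟩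
  have hfix := pow_mul_add_apply_of_pow_apply_eq_self hym t 0
  rw [add_zero, pow_zero, one_apply_eq_self] at hfix
  simpa only [Metric.mem_ball, dist_eq_norm, hfix] using hclose (m * t) ht

lemma OrbitApproximable.exists_frequentlyShadows [CompleteSpace X]
    [TopologicalSpace.SeparableSpace X] {X₀ : Submodule R X} (h : OrbitApproximable T X₀ α)
    (hα : 0 ≤ α) (hinv : ∀ x ∈ X₀, T x ∈ X₀) (hper : ∀ x ∈ X₀, ∃ m : ℕ, 1 ≤ m ∧ (T ^ m) x = x)
    (hdense : Dense (X₀ : Set X)) :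
    ∃ x : X, ∃ D ⊆ (X₀ : Set X), Dense D ∧ ∀ y ∈ D, FrequentlyShadows T α x y := by
  obtain ⟨D, hDX₀, hDc, hD⟩ := hdense.exists_countable_dense_subset
  obtain ⟨Y, rfl⟩ := hDc.exists_eq_range hD.nonempty
  -- `s ↦ Y (unpair s).2` takes every value `Y i` at arbitrarily large `s`
  obtain ⟨u, n, hS⟩ :=
    h.exists_isShadowingScheme hα hinv hper (Y := fun s => Y s.unpair.2) fun s => hDX₀ ⟨_, rfl⟩
  obtain ⟨x, hx⟩ := hS.exists_limit_shadowing hα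
  refine ⟨x, range Y, hDX₀, hD, ?_⟩
  rintro _ ⟨i, rfl⟩ δ hδ N₀
  obtain ⟨s₁, hs₁⟩ := exists_pow_lt_of_lt_one (half_pos hδ) (one_half_lt_one (α := ℝ))
  set s := Nat.pair (max N₀ s₁) i
  have hs : max N₀ s₁ ≤ s := Nat.left_le_pair _ _
  refine ⟨n (s + 1), ?_, fun k hk => ?_⟩
  · exact (le_max_left _ _).trans (hs.trans ((Nat.le_succ s).trans (hS.strictMono.id_le _)))
  · have hpow : (1 / 2 : ℝ) ^ s ≤ (1 / 2) ^ s₁ :=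
      pow_le_pow_of_le_one (by norm_num) (by norm_num) ((le_max_right _ _).trans hs)
    have := hx s k hk
    simp only [s, Nat.unpair_pair] at this
    refine this.trans_lt ?_
    rw [div_eq_mul_one_div 2, ← one_div_pow]
    linarith

end Shadowing

theorem statement13 {𝕜 : Type*} [RCLike 𝕜] {X : Type*} [NormedAddCommGroup X]
    [NormedSpace 𝕜 X] [CompleteSpace X] [TopologicalSpace.SeparableSpace X]
    (T : X →L[𝕜] X) (X₀ : Submodule 𝕜 X)
    (hdense : Dense (X₀ : Set X))
    (hinv : ∀ x ∈ X₀, T x ∈ X₀)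
    (hper : ∀ x ∈ X₀, ∃ m : ℕ, 1 ≤ m ∧ (T ^ m) x = x)
    (α : ℝ) (hα0 : 0 < α)
    (h : ∀ x ∈ X₀, ∀ ε : ℝ, 0 < ε → ∃ z ∈ X₀, ∃ n : ℕ, 1 ≤ n ∧
      ‖z‖ < ε ∧ ∀ k : ℕ, (k : ℝ) ≤ α * n → ‖(T ^ (n + k)) z - (T ^ k) x‖ < ε) :
    ((∃ x : X, Dense (Set.range fun n : ℕ => (T ^ n) x)) ∧
      Dense {z : X | ∃ m : ℕ, 1 ≤ m ∧ (T ^ m) z = z}) ∧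
    (∃ x : X, ∀ V : Set X, IsOpen V → V.Nonempty →
      0 < upperDensity {n : ℕ | (T ^ n) x ∈ V}) := by
  have happrox : OrbitApproximable T X₀ α := fun x hx ε hε =>
    let ⟨z, hz, n, _, hzε, hn⟩ := h x hx ε hε
    ⟨z, hz, n, hzε, hn⟩
  obtain ⟨x, D, hDX₀, hD, hshadow⟩ :=
    happrox.exists_frequentlyShadows hα0.le hinv hper hdense
  have hUFHC : ∀ V : Set X, IsOpen V → V.Nonempty → 0 < upperDensity {n | (T ^ n) x ∈ V} := by
    intro V hV hVne
    obtain ⟨y, hyD, hyV⟩ := hD.exists_mem_open hV hVne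
    obtain ⟨m, hm, hym⟩ := hper y (hDX₀ hyD)
    exact (hshadow y hyD).upperDensity_pos hα0 hm hym hV hyV
  exact ⟨⟨⟨x, denseRange_of_upperDensity_pos hUFHC⟩, hdense.mono hper⟩, x, hUFHC⟩
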